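/- Let A be a real tensor of size n×n×n₃, invertible with inverse A⁻¹, let E be a tensor of size n×n×n₃ with ‖A⁻¹‖₂·‖E‖₂ < 1, and set M = A+E (entrywise). Let B and K be tensors of size n×n₄×n₃ with B ≠ 0, and let X be the (unique) solution of A*X = B. Then there exists a unique tensor H of size n×n₄×n₃ with M*(X+H) = B+K, and it satisfies ‖H‖_F/‖X‖_F ≤ (κ₁/γ)·(‖E‖₂/‖A‖_F + √n₃·‖K‖_F/‖B‖_F), where κ₁ = ‖A⁻¹‖₂·‖A‖_F and γ = 1 − ‖A⁻¹‖₂·‖E‖₂. -/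

import Mathlib

open scoped Matrix.Norms.L2Operator

noncomputable section

/-- The t-product of third-order tensors. -/
def tProd {n₁ n₂ n₃ n₄ : ℕ} [NeZero n₃] (A : Fin n₁ → Fin n₂ → ZMod n₃ → ℝ)
    (B : Fin n₂ → Fin n₄ → ZMod n₃ → ℝ) : Fin n₁ → Fin n₄ → ZMod n₃ → ℝ :=
  fun i j k => ∑ l : Fin n₂, ∑ m : ZMod n₃, A i l (k - m) * B l j m

/-- The Frobenius norm of a third-order tensor. -/
def frobNorm {n₁ n₂ n₃ : ℕ} [NeZero n₃] (A : Fin n₁ → Fin n₂ → ZMod n₃ → ℝ) : ℝ :=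
  Real.sqrt (∑ i : Fin n₁, ∑ j : Fin n₂, ∑ k : ZMod n₃, (A i j k) ^ 2)

/-- The block circulant matrix of a third-order tensor. -/
def bcirc {n₁ n₂ n₃ : ℕ} (A : Fin n₁ → Fin n₂ → ZMod n₃ → ℝ) :
    Matrix (Fin n₁ × ZMod n₃) (Fin n₂ × ZMod n₃) ℝ :=
  fun p q => A p.1 q.1 (p.2 - q.2)

/-- The spectral norm of a third-order tensor: the L2 operator norm of its
block circulant matrix. -/
def specNorm {n₁ n₂ n₃ : ℕ} [NeZero n₃] (A : Fin n₁ → Fin n₂ → ZMod n₃ → ℝ) : ℝ :=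
  ‖bcirc A‖

/-- The identity tensor. -/
def tId (n n₃ : ℕ) : Fin n → Fin n → ZMod n₃ → ℝ :=
  fun i j k => if i = j ∧ k = 0 then 1 else 0

/-- The tensor transpose. -/
def tTrans {n₁ n₂ n₃ : ℕ} (A : Fin n₁ → Fin n₂ → ZMod n₃ → ℝ) :
    Fin n₂ → Fin n₁ → ZMod n₃ → ℝ :=
  fun i j k => A j i (-k)

/-- `X` is a Moore-Penrose inverse of `A`. -/
def IsMPInv {n₁ n₂ n₃ : ℕ} [NeZero n₃] (A : Fin n₁ → Fin n₂ → ZMod n₃ → ℝ)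
    (X : Fin n₂ → Fin n₁ → ZMod n₃ → ℝ) : Prop :=
  tProd (tProd A X) A = A ∧ tProd (tProd X A) X = X ∧
    tTrans (tProd A X) = tProd A X ∧ tTrans (tProd X A) = tProd X A

/-- The `i`-th DFT block of a third-order tensor. -/
def dftBlock {n₁ n₂ n₃ : ℕ} [NeZero n₃] (A : Fin n₁ → Fin n₂ → ZMod n₃ → ℝ) (i : ZMod n₃) :
    Matrix (Fin n₁) (Fin n₂) ℂ :=
  fun p q => ∑ k : ZMod n₃,
    Complex.exp (-2 * Real.pi * Complex.I * (i.val : ℂ) * (k.val : ℂ) / (n₃ : ℂ)) * (A p q k : ℂ)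

end


/-! Through the block circulant matrix, `‖M * Y‖_F ≤ ‖M‖₂ ‖Y‖_F`, and `‖A‖₂ ≤ √n₃ ‖A‖_F` because
every entry of `A` occurs `n₃` times in `bcirc A`. If `(A + E) * Z = W`, then
`Z = A⁻¹ * (W - E * Z)`, so `(1 - ‖A⁻¹‖₂ ‖E‖₂) ‖Z‖_F ≤ ‖A⁻¹‖₂ ‖W‖_F`. For `W = 0` this makes
t-multiplication by `A + E` injective, hence bijective on a finite-dimensional space, which gives
existence and uniqueness of `H`. For `Z = H` and `W = K - E * X` it bounds `‖H‖_F`, and dividing by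
`‖X‖_F` with `‖B‖_F = ‖A * X‖_F ≤ √n₃ ‖A‖_F ‖X‖_F` gives the stated bound. -/

namespace Matrix

variable {m p : Type*} [Fintype m] [Fintype p] [DecidableEq p]

theorem l2_opNorm_le_sqrt_sum_sq (C : Matrix m p ℝ) :
    ‖C‖ ≤ √(∑ i, ∑ j, C i j ^ 2) := by
  rw [l2_opNorm_def]
  refine ContinuousLinearMap.opNorm_le_bound _ (Real.sqrt_nonneg _) fun x => ?_
  rw [← Real.sqrt_sq (norm_nonneg _), ← Real.sqrt_sq (norm_nonneg x), ← Real.sqrt_mul']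
  · refine Real.sqrt_le_sqrt ?_
    rw [EuclideanSpace.real_norm_sq_eq, EuclideanSpace.real_norm_sq_eq, Finset.sum_mul]
    refine Finset.sum_le_sum fun i _ => ?_
    exact Finset.sum_mul_sq_le_sq_mul_sq Finset.univ (C i) x.ofLp
  · positivity

end Matrix

section Tensor

variable {n₁ n₂ n₃ n₄ n₅ : ℕ}

theorem bcirc_injective : Function.Injective (bcirc : (Fin n₁ → Fin n₂ → ZMod n₃ → ℝ) → _) := by
  intro A B h
  funext i j k
  simpa [bcirc] using congrFun (congrFun h (i, k)) (j, 0)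

theorem bcirc_tId (n : ℕ) : bcirc (tId n n₃) = 1 := by
  funext p q
  simp only [bcirc, tId, Matrix.one_apply, Prod.ext_iff, sub_eq_zero]

variable [NeZero n₃]

theorem bcirc_tProd (A : Fin n₁ → Fin n₂ → ZMod n₃ → ℝ) (B : Fin n₂ → Fin n₄ → ZMod n₃ → ℝ) :
    bcirc (tProd A B) = bcirc A * bcirc B := by
  funext p q
  simp only [bcirc, tProd, Matrix.mul_apply, Fintype.sum_prod_type]
  refine Finset.sum_congr rfl fun l _ => ?_
  refine Fintype.sum_equiv (Equiv.addLeft q.2) _ _ fun m => ?_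
  simp only [Equiv.coe_addLeft, sub_sub, add_sub_cancel_left]

theorem tProd_assoc (A : Fin n₁ → Fin n₂ → ZMod n₃ → ℝ) (B : Fin n₂ → Fin n₅ → ZMod n₃ → ℝ)
    (C : Fin n₅ → Fin n₄ → ZMod n₃ → ℝ) :
    tProd (tProd A B) C = tProd A (tProd B C) :=
  bcirc_injective <| by simp only [bcirc_tProd, Matrix.mul_assoc]

theorem tId_tProd (Y : Fin n₁ → Fin n₄ → ZMod n₃ → ℝ) : tProd (tId n₁ n₃) Y = Y :=
  bcirc_injective <| by rw [bcirc_tProd, bcirc_tId, Matrix.one_mul]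

theorem zero_tProd (Y : Fin n₂ → Fin n₄ → ZMod n₃ → ℝ) :
    tProd (0 : Fin n₁ → Fin n₂ → ZMod n₃ → ℝ) Y = 0 := by
  funext i j k
  simp [tProd]

theorem tProd_add_left (A E : Fin n₁ → Fin n₂ → ZMod n₃ → ℝ)
    (Y : Fin n₂ → Fin n₄ → ZMod n₃ → ℝ) :
    tProd (A + E) Y = tProd A Y + tProd E Y := by
  funext i j k
  simp only [tProd, Pi.add_apply, add_mul, Finset.sum_add_distrib]

def tProdLeft (A : Fin n₁ → Fin n₂ → ZMod n₃ → ℝ) :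
    (Fin n₂ → Fin n₄ → ZMod n₃ → ℝ) →ₗ[ℝ] (Fin n₁ → Fin n₄ → ZMod n₃ → ℝ) where
  toFun := tProd A
  map_add' Y Z := by
    funext i j k
    simp only [tProd, Pi.add_apply, mul_add, Finset.sum_add_distrib]
  map_smul' c Y := by
    funext i j k
    simp only [tProd, Pi.smul_apply, smul_eq_mul, RingHom.id_apply, Finset.mul_sum, mul_left_comm c]

theorem tProdLeft_apply (A : Fin n₁ → Fin n₂ → ZMod n₃ → ℝ) (Y : Fin n₂ → Fin n₄ → ZMod n₃ → ℝ) :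
    tProdLeft A Y = tProd A Y := rfl

theorem tProd_add_right (A : Fin n₁ → Fin n₂ → ZMod n₃ → ℝ) (Y Z : Fin n₂ → Fin n₄ → ZMod n₃ → ℝ) :
    tProd A (Y + Z) = tProd A Y + tProd A Z :=
  (tProdLeft A).map_add Y Z

theorem tProd_zero_right (A : Fin n₁ → Fin n₂ → ZMod n₃ → ℝ) :
    tProd A (0 : Fin n₂ → Fin n₄ → ZMod n₃ → ℝ) = 0 :=
  (tProdLeft A).map_zero

end Tensor

section Norms

variable {n₁ n₂ n₃ n₄ : ℕ}

/-- Grouping the entries of `Y` by lateral slice makes `frobNorm` a Euclidean norm on which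
`tProd M` acts slice by slice through `bcirc M`. -/
def unfoldCols (Y : Fin n₁ → Fin n₄ → ZMod n₃ → ℝ) :
    PiLp 2 (fun _ : Fin n₄ => EuclideanSpace ℝ (Fin n₁ × ZMod n₃)) :=
  WithLp.toLp 2 fun j => WithLp.toLp 2 fun p => Y p.1 j p.2

theorem unfoldCols_sub (Y Z : Fin n₁ → Fin n₄ → ZMod n₃ → ℝ) :
    unfoldCols (Y - Z) = unfoldCols Y - unfoldCols Z := rfl

variable [NeZero n₃]

theorem frobNorm_eq_norm_unfoldCols (Y : Fin n₁ → Fin n₄ → ZMod n₃ → ℝ) :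
    frobNorm Y = ‖unfoldCols Y‖ := by
  rw [PiLp.norm_eq_of_L2, frobNorm, Finset.sum_comm]
  simp only [EuclideanSpace.real_norm_sq_eq, Fintype.sum_prod_type]
  rfl

theorem frobNorm_nonneg (Y : Fin n₁ → Fin n₄ → ZMod n₃ → ℝ) : 0 ≤ frobNorm Y :=
  Real.sqrt_nonneg _

theorem frobNorm_zero : frobNorm (0 : Fin n₁ → Fin n₄ → ZMod n₃ → ℝ) = 0 := by
  simp [frobNorm]

theorem frobNorm_sub_le (Y Z : Fin n₁ → Fin n₄ → ZMod n₃ → ℝ) :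
    frobNorm (Y - Z) ≤ frobNorm Y + frobNorm Z := by
  simpa only [frobNorm_eq_norm_unfoldCols, unfoldCols_sub] using
    norm_sub_le (unfoldCols Y) (unfoldCols Z)

theorem frobNorm_pos {Y : Fin n₁ → Fin n₄ → ZMod n₃ → ℝ} (hY : Y ≠ 0) : 0 < frobNorm Y := by
  rw [frobNorm_eq_norm_unfoldCols, norm_pos_iff]
  contrapose! hY
  funext i j k
  exact congr($hY j (i, k))

theorem unfoldCols_tProd (M : Fin n₁ → Fin n₂ → ZMod n₃ → ℝ) (Y : Fin n₂ → Fin n₄ → ZMod n₃ → ℝ)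
    (j : Fin n₄) :
    unfoldCols (tProd M Y) j =
      (EuclideanSpace.equiv _ ℝ).symm ((bcirc M).mulVec (unfoldCols Y j)) := by
  ext p
  simp [unfoldCols, tProd, bcirc, Matrix.mulVec, dotProduct, Fintype.sum_prod_type]

theorem specNorm_nonneg (M : Fin n₁ → Fin n₂ → ZMod n₃ → ℝ) : 0 ≤ specNorm M :=
  norm_nonneg _

theorem frobNorm_tProd_le (M : Fin n₁ → Fin n₂ → ZMod n₃ → ℝ) (Y : Fin n₂ → Fin n₄ → ZMod n₃ → ℝ) :
    frobNorm (tProd M Y) ≤ specNorm M * frobNorm Y := by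
  have hcol (j : Fin n₄) :
      ‖unfoldCols (tProd M Y) j‖ ^ 2 ≤ (specNorm M * ‖unfoldCols Y j‖) ^ 2 := by
    rw [unfoldCols_tProd]
    gcongr
    exact Matrix.l2_opNorm_mulVec _ _
  rw [frobNorm_eq_norm_unfoldCols, frobNorm_eq_norm_unfoldCols]
  refine (sq_le_sq₀ (norm_nonneg _) (mul_nonneg (norm_nonneg _) (norm_nonneg _))).1 ?_
  rw [mul_pow, PiLp.norm_sq_eq_of_L2, PiLp.norm_sq_eq_of_L2, Finset.mul_sum]
  exact Finset.sum_le_sum fun j _ => (hcol j).trans_eq (mul_pow _ _ _)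

theorem sum_sq_bcirc (A : Fin n₁ → Fin n₂ → ZMod n₃ → ℝ) :
    ∑ p, ∑ q, bcirc A p q ^ 2 = n₃ * ∑ i, ∑ j, ∑ k, A i j k ^ 2 := by
  have hshift (i : Fin n₁) (k : ZMod n₃) :
      ∑ j, ∑ m, A i j (k - m) ^ 2 = ∑ j, ∑ m, A i j m ^ 2 :=
    Finset.sum_congr rfl fun j _ => Fintype.sum_equiv (Equiv.subLeft k) _ _ fun _ => rfl
  simp only [bcirc, Fintype.sum_prod_type, hshift, Finset.sum_const, Finset.card_univ, ZMod.card,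
    nsmul_eq_mul, Finset.mul_sum]

theorem specNorm_le_sqrt_mul_frobNorm (A : Fin n₁ → Fin n₂ → ZMod n₃ → ℝ) :
    specNorm A ≤ √n₃ * frobNorm A := by
  rw [frobNorm, ← Real.sqrt_mul (Nat.cast_nonneg _), ← sum_sq_bcirc]
  exact Matrix.l2_opNorm_le_sqrt_sum_sq _

end Norms

theorem div_le_of_perturbation_bounds {s e a b c k x h : ℝ} (hs : 0 ≤ s) (hk : 0 ≤ k)
    (ha : 0 < a) (hb : 0 < b) (hx : 0 < x) (hγ : 0 < 1 - s * e)
    (hh : (1 - s * e) * h ≤ s * (k + e * x)) (hbx : b ≤ c * a * x) :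
    h / x ≤ s * a / (1 - s * e) * (e / a + c * k / b) := by
  have hkx : k * b ≤ c * a * k * x := by nlinarith
  have key : h * b ≤ s * (e * x * b + c * a * k * x) / (1 - s * e) := by
    rw [le_div_iff₀ hγ]
    nlinarith [mul_le_mul_of_nonneg_left hkx hs]
  rw [div_le_iff₀ hx]
  calc h ≤ s * (e * x * b + c * a * k * x) / (1 - s * e) / b := by rwa [le_div_iff₀ hb]
    _ = _ := by field_simp

section Perturbation

variable {n n₃ n₄ : ℕ} [NeZero n₃] {A Ainv E : Fin n → Fin n → ZMod n₃ → ℝ}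

theorem mul_frobNorm_le_of_tProd_add_eq (hA : tProd Ainv A = tId n n₃)
    {Z W : Fin n → Fin n₄ → ZMod n₃ → ℝ} (h : tProd (A + E) Z = W) :
    (1 - specNorm Ainv * specNorm E) * frobNorm Z ≤ specNorm Ainv * frobNorm W := by
  have hZ : Z = tProd Ainv (W - tProd E Z) := by
    rw [← h, tProd_add_left, add_sub_cancel_right, ← tProd_assoc, hA, tId_tProd]
  calc (1 - specNorm Ainv * specNorm E) * frobNorm Z
      = frobNorm Z - specNorm Ainv * (specNorm E * frobNorm Z) := by ring
    _ ≤ specNorm Ainv * (frobNorm W + specNorm E * frobNorm Z)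
          - specNorm Ainv * (specNorm E * frobNorm Z) := by
      gcongr
      conv_lhs => rw [hZ]
      refine (frobNorm_tProd_le _ _).trans (mul_le_mul_of_nonneg_left ?_ (specNorm_nonneg _))
      exact (frobNorm_sub_le _ _).trans (add_le_add_right (frobNorm_tProd_le E Z) _)
    _ = specNorm Ainv * frobNorm W := by ring

theorem tProd_add_bijective (hA : tProd Ainv A = tId n n₃)
    (hE : specNorm Ainv * specNorm E < 1) :
    Function.Bijective (tProd (A + E) : (Fin n → Fin n₄ → ZMod n₃ → ℝ) → _) := by
  have hinj : Function.Injective (tProdLeft (n₄ := n₄) (A + E)) := by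
    refine (injective_iff_map_eq_zero _).2 fun Z hZ => ?_
    by_contra hne
    have := mul_frobNorm_le_of_tProd_add_eq hA hZ
    rw [frobNorm_zero, mul_zero] at this
    nlinarith [frobNorm_pos hne]
  exact ⟨hinj, LinearMap.injective_iff_surjective.1 hinj⟩

end Perturbation

theorem perturbed_system_frobenius_bound_general (n n₃ n₄ : ℕ) [NeZero n₃]
    (A Ainv E : Fin n → Fin n → ZMod n₃ → ℝ)
    (B K X : Fin n → Fin n₄ → ZMod n₃ → ℝ)
    (hA₂ : tProd Ainv A = tId n n₃)
    (hE : specNorm Ainv * specNorm E < 1)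
    (hB : B ≠ 0)
    (hX : tProd A X = B) :
    (∃! H : Fin n → Fin n₄ → ZMod n₃ → ℝ, tProd (A + E) (X + H) = B + K) ∧
      ∀ H : Fin n → Fin n₄ → ZMod n₃ → ℝ, tProd (A + E) (X + H) = B + K →
        frobNorm H / frobNorm X ≤
          (specNorm Ainv * frobNorm A / (1 - specNorm Ainv * specNorm E)) *
            (specNorm E / frobNorm A + Real.sqrt n₃ * frobNorm K / frobNorm B) := by
  obtain ⟨hinj, hsurj⟩ := tProd_add_bijective (n₄ := n₄) hA₂ hE
  refine ⟨?_, fun H hH => ?_⟩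
  · obtain ⟨Y, hY⟩ := hsurj (B + K)
    refine ⟨Y - X, by simpa only [add_sub_cancel] using hY, fun H hH => ?_⟩
    rw [← hinj (hH.trans hY.symm), add_sub_cancel_left]
  have hX₀ : X ≠ 0 := fun h => hB (by rw [← hX, h, tProd_zero_right])
  have hA₀ : A ≠ 0 := fun h => hB (by rw [← hX, h, zero_tProd])
  have hH' : tProd (A + E) H = K - tProd E X := by
    rw [tProd_add_right, tProd_add_left A E X, hX] at hH
    linear_combination hH
  have hKX : frobNorm (K - tProd E X) ≤ frobNorm K + specNorm E * frobNorm X :=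
    (frobNorm_sub_le _ _).trans (add_le_add_right (frobNorm_tProd_le E X) _)
  have hBX : frobNorm B ≤ √n₃ * frobNorm A * frobNorm X := hX ▸ (frobNorm_tProd_le A X).trans
    (mul_le_mul_of_nonneg_right (specNorm_le_sqrt_mul_frobNorm A) (frobNorm_nonneg X))
  refine div_le_of_perturbation_bounds (specNorm_nonneg _) (frobNorm_nonneg K) (frobNorm_pos hA₀)
    (frobNorm_pos hB) (frobNorm_pos hX₀) (by linarith) ?_ hBX
  exact (mul_frobNorm_le_of_tProd_add_eq hA₂ hH').trans
    (mul_le_mul_of_nonneg_left hKX (specNorm_nonneg _))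

theorem perturbed_system_frobenius_bound (n n₃ n₄ : ℕ) [NeZero n₃]
    (hn : 0 < n) (hn₄ : 0 < n₄)
    (A Ainv E : Fin n → Fin n → ZMod n₃ → ℝ)
    (B K X : Fin n → Fin n₄ → ZMod n₃ → ℝ)
    (hA₁ : tProd A Ainv = tId n n₃) (hA₂ : tProd Ainv A = tId n n₃)
    (hE : specNorm Ainv * specNorm E < 1)
    (hB : B ≠ 0)
    (hX : tProd A X = B) :
    (∃! H : Fin n → Fin n₄ → ZMod n₃ → ℝ, tProd (A + E) (X + H) = B + K) ∧
      ∀ H : Fin n → Fin n₄ → ZMod n₃ → ℝ, tProd (A + E) (X + H) = B + K →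
        frobNorm H / frobNorm X ≤
          (specNorm Ainv * frobNorm A / (1 - specNorm Ainv * specNorm E)) *
            (specNorm E / frobNorm A + Real.sqrt n₃ * frobNorm K / frobNorm B) :=
  perturbed_system_frobenius_bound_general n n₃ n₄ A Ainv E B K X hA₂ hE hB hX
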